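/- Let n ≥ 2 and let R = { x ∈ K_n : x·a_1 = f }. Then R is closed under multiplication (x, y ∈ R implies x·y ∈ R). Moreover, for x, y ∈ R: if y = a_n a_{n-1} ⋯ a_2 then x·y = x, and if y ≠ a_n a_{n-1} ⋯ a_2 then x·y = f. -/

import Mathlib

namespace Kiselman

/-- The defining relations of Kiselman's semigroup on the free monoid over `Fin n`,
where the index `i : Fin n` represents the generator `a_{i+1}` (so letters are 0-based). -/
def Rel (n : ℕ) : FreeMonoid (Fin n) → FreeMonoid (Fin n) → Prop := fun u v =>
  (∃ i : Fin n, u = .of i * .of i ∧ v = .of i) ∨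
  (∃ i j : Fin n, j < i ∧
    ((u = .of i * .of j * .of i ∧ v = .of i * .of j) ∨
     (u = .of j * .of i * .of j ∧ v = .of i * .of j)))

/-- Kiselman's semigroup (monoid) `K n`, presented by the relations `Rel n`. -/
def K (n : ℕ) : Type := (conGen (Rel n)).Quotient

instance (n : ℕ) : Monoid (K n) := inferInstanceAs (Monoid (conGen (Rel n)).Quotient)

/-- The canonical epimorphism `φ` from the free monoid onto `K n`. -/
def phi (n : ℕ) : FreeMonoid (Fin n) →* K n := Con.mk' _

/-- `φ` applied to a word given as a list of (0-based) letters. -/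
def phiL (n : ℕ) (w : List (Fin n)) : K n := phi n (FreeMonoid.ofList w)

/-- The generator `a_{i+1}` of `K n` (`i` is the 0-based index). -/
def gen {n : ℕ} (i : Fin n) : K n := phi n (FreeMonoid.of i)

/-- The word `a_hi a_{hi-1} ⋯ a_lo` (letters named 1-based), as a list of 0-based indices:
`[hi-1, hi-2, …, lo-1]` (capped at `n`). -/
def descList (n lo hi : ℕ) : List (Fin n) :=
  ((List.finRange n).filter (fun k => decide (lo ≤ k.val + 1 ∧ k.val + 1 ≤ hi))).reverse

/-- The zero element `f = a_n a_{n-1} ⋯ a_2 a_1` of `K n`. -/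
def fEl (n : ℕ) : K n := phiL n (descList n 1 n)

/-- A word `w` is canonical if for every factorization `w = p ++ [i] ++ u ++ [i] ++ q`
there are letters `j > i` and `k < i` occurring in `u`. -/
def Canonical {n : ℕ} (w : List (Fin n)) : Prop :=
  ∀ (p u q : List (Fin n)) (i : Fin n),
    w = p ++ [i] ++ u ++ [i] ++ q →
    (∃ j ∈ u, i < j) ∧ (∃ k ∈ u, k < i)

/-- The submonoid of `K n` generated by `{a_2, a_3, …, a_n}`. -/
def upper (n : ℕ) : Submonoid (K n) := Submonoid.closure (gen '' {i : Fin n | i.val ≠ 0})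

/-- The submonoid of `K n` generated by `{a_1, a_2, …, a_{n-1}}`. -/
def lower (n : ℕ) : Submonoid (K n) := Submonoid.closure (gen '' {i : Fin n | i.val + 1 ≠ n})

/-- `m(x) = min { i ∈ {0,…,n} : x ⬝ (a_i a_{i-1} ⋯ a_1) = f }`. -/
noncomputable def mIdx {n : ℕ} (x : K n) : ℕ :=
  sInf {i : ℕ | x * phiL n (descList n 1 i) = fEl n}

section Aux

variable {n : ℕ}

lemma phi_eq {u v : FreeMonoid (Fin n)} (h : conGen (Rel n) u v) : phi n u = phi n v :=
  (Con.eq _).mpr h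

lemma gen_idem (i : Fin n) : gen i * gen i = gen i := by
  have := phi_eq (ConGen.Rel.of _ _ (Or.inl ⟨i, rfl, rfl⟩))
  simpa [gen, map_mul] using this

lemma rel_iji {i j : Fin n} (h : j < i) : gen i * gen j * gen i = gen i * gen j := by
  have := phi_eq (ConGen.Rel.of _ _ (Or.inr ⟨i, j, h, Or.inl ⟨rfl, rfl⟩⟩))
  simpa [gen, map_mul] using this

lemma rel_jij {i j : Fin n} (h : j < i) : gen j * gen i * gen j = gen i * gen j := by
  have := phi_eq (ConGen.Rel.of _ _ (Or.inr ⟨i, j, h, Or.inr ⟨rfl, rfl⟩⟩))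
  simpa [gen, map_mul] using this

lemma phiL_nil : phiL n ([] : List (Fin n)) = 1 := rfl

lemma phiL_append (l₁ l₂ : List (Fin n)) : phiL n (l₁ ++ l₂) = phiL n l₁ * phiL n l₂ := by
  simp [phiL, FreeMonoid.ofList_append, map_mul]

lemma phiL_singleton (a : Fin n) : phiL n [a] = gen a := by
  simp [phiL, gen, FreeMonoid.ofList_singleton]

lemma phiL_cons (a : Fin n) (l : List (Fin n)) : phiL n (a :: l) = gen a * phiL n l := by
  have h : (a :: l) = [a] ++ l := rfl
  rw [h, phiL_append, phiL_singleton]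

/-! ### the two automata -/

def upd (S : Finset (Fin n)) (j : Fin n) : Finset (Fin n) :=
  if j ∈ S then S else insert j (S.filter (fun m => j < m))

def updL (T : Finset (Fin n)) (j : Fin n) : Finset (Fin n) :=
  if j ∈ T then T else insert j (T.filter (fun m => m < j))

def run (S : Finset (Fin n)) (l : List (Fin n)) : Finset (Fin n) := l.foldl upd S

lemma run_nil (S : Finset (Fin n)) : run S [] = S := rfl
lemma run_cons (S : Finset (Fin n)) (a : Fin n) (l : List (Fin n)) :
    run S (a :: l) = run (upd S a) l := rfl
lemma run_append (S : Finset (Fin n)) (l₁ l₂ : List (Fin n)) :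
    run S (l₁ ++ l₂) = run (run S l₁) l₂ := List.foldl_append

lemma upd_of_mem {S : Finset (Fin n)} {j : Fin n} (h : j ∈ S) : upd S j = S := if_pos h

lemma upd_of_not_mem {S : Finset (Fin n)} {j : Fin n} (h : j ∉ S) :
    upd S j = insert j (S.filter (fun m => j < m)) := if_neg h

lemma self_mem_upd (S : Finset (Fin n)) (j : Fin n) : j ∈ upd S j := by
  unfold upd; split
  · assumption
  · exact Finset.mem_insert_self _ _

lemma mem_upd_of_lt {S : Finset (Fin n)} {i j : Fin n} (hi : i ∈ S) (hj : j < i) :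
    i ∈ upd S j := by
  unfold upd; split
  · exact hi
  · exact Finset.mem_insert_of_mem (Finset.mem_filter.mpr ⟨hi, hj⟩)

lemma upd_swap {S : Finset (Fin n)} {i j : Fin n} (hji : j < i) :
    upd (upd (upd S j) i) j = upd (upd S i) j := by
  by_cases hj : j ∈ S
  · rw [upd_of_mem hj]
  · by_cases hi : i ∈ S
    · rw [upd_of_mem (mem_upd_of_lt hi hji), upd_of_mem hi,
        upd_of_mem (self_mem_upd S j)]
    · have h1 : upd (upd S j) i = upd S i := by
        rw [upd_of_not_mem hj]
        have hiA : i ∉ insert j (S.filter (fun m => j < m)) := by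
          simp only [Finset.mem_insert, Finset.mem_filter]
          rintro (rfl | ⟨h, -⟩)
          · exact absurd hji (lt_irrefl _)
          · exact hi h
        rw [upd_of_not_mem hiA, upd_of_not_mem hi]
        congr 1
        ext m
        simp only [Finset.mem_filter, Finset.mem_insert]
        constructor
        · rintro ⟨rfl | ⟨hm, -⟩, him⟩
          · exact absurd (hji.trans him) (lt_irrefl _)
          · exact ⟨hm, him⟩
        · rintro ⟨hm, him⟩
          exact ⟨Or.inr ⟨hm, hji.trans him⟩, him⟩
      rw [h1]

/-! ### invariance -/

def invCon (n : ℕ) : Con (FreeMonoid (Fin n)) :=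
  { r := fun u v => ∀ S : Finset (Fin n), run S u.toList = run S v.toList,
    iseqv := ⟨fun _ _ => rfl, fun h S => (h S).symm, fun h1 h2 S => (h1 S).trans (h2 S)⟩,
    mul' := by
      intro u₁ u₂ v₁ v₂ h1 h2 S
      simp only [FreeMonoid.toList_mul, run_append]
      rw [h1 S, h2 _] }

lemma rel_invCon : ∀ u v, Rel n u v → invCon n u v := by
  rintro u v (⟨i, rfl, rfl⟩ | ⟨i, j, hji, (⟨rfl, rfl⟩ | ⟨rfl, rfl⟩)⟩) S <;>
    simp only [invCon, FreeMonoid.toList_mul, FreeMonoid.toList_of, run] <;>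
    simp only [List.foldl, List.append_assoc, List.singleton_append, List.cons_append,
      List.nil_append]
  · exact congrArg (fun T => List.foldl upd T []) (upd_of_mem (self_mem_upd S i))
  · exact congrArg (fun T => List.foldl upd T [])
      (upd_of_mem (mem_upd_of_lt (self_mem_upd S i) hji))
  · exact congrArg (fun T => List.foldl upd T []) (upd_swap hji)

lemma run_eq_of_phi_eq {u v : FreeMonoid (Fin n)} (h : phi n u = phi n v) (S : Finset (Fin n)) :
    run S u.toList = run S v.toList :=
  Con.le_def.mp (Con.conGen_le.mpr rel_invCon) ((Con.eq _).mp h) S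

/-! ### soundness -/

lemma sound_step {x : K n} {S : Finset (Fin n)}
    (h : ∀ k ∈ S, x * gen k = x) (j : Fin n) :
    ∀ k ∈ upd S j, (x * gen j) * gen k = x * gen j := by
  intro k hk
  unfold upd at hk
  split at hk
  · have hxj : x * gen j = x := h j ‹j ∈ S›
    rw [hxj]; exact h k hk
  · rcases Finset.mem_insert.mp hk with rfl | hk'
    · rw [mul_assoc, gen_idem]
    · obtain ⟨hkS, hjk⟩ := Finset.mem_filter.mp hk'
      have hxk : x * gen k = x := h k hkS
      calc x * gen j * gen k = x * gen k * gen j * gen k := by rw [hxk]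
        _ = x * (gen k * gen j * gen k) := by
              rw [mul_assoc x, mul_assoc x]
        _ = x * (gen k * gen j) := by rw [rel_iji hjk]
        _ = x * gen k * gen j := by rw [mul_assoc]
        _ = x * gen j := by rw [hxk]

lemma soundL_step {x : K n} {T : Finset (Fin n)}
    (h : ∀ k ∈ T, gen k * x = x) (j : Fin n) :
    ∀ k ∈ updL T j, gen k * (gen j * x) = gen j * x := by
  intro k hk
  unfold updL at hk
  split at hk
  · have hxj : gen j * x = x := h j ‹j ∈ T›
    rw [hxj]; exact h k hk
  · rcases Finset.mem_insert.mp hk with rfl | hk'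
    · rw [← mul_assoc, gen_idem]
    · obtain ⟨hkT, hkj⟩ := Finset.mem_filter.mp hk'
      have hxk : gen k * x = x := h k hkT
      calc gen k * (gen j * x) = gen k * (gen j * (gen k * x)) := by rw [hxk]
        _ = (gen k * gen j * gen k) * x := by
              rw [mul_assoc, mul_assoc]
        _ = (gen j * gen k) * x := by rw [rel_jij hkj]
        _ = gen j * (gen k * x) := by rw [mul_assoc]
        _ = gen j * x := by rw [hxk]

lemma sound_run : ∀ (l : List (Fin n)) (x : K n) (S : Finset (Fin n)),
    (∀ k ∈ S, x * gen k = x) → ∀ k ∈ run S l, (x * phiL n l) * gen k = x * phiL n l := by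
  intro l
  induction l with
  | nil => intro x S h k hk; simpa [phiL_nil] using h k hk
  | cons a t ih =>
    intro x S h k hk
    have h2 := ih (x * gen a) (upd S a) (sound_step h a) k hk
    simpa [phiL_cons, mul_assoc] using h2

lemma soundL_run : ∀ (l : List (Fin n)) (x : K n) (T : Finset (Fin n)),
    (∀ k ∈ T, gen k * x = x) →
    ∀ k ∈ List.foldr (fun j T => updL T j) T l, gen k * (phiL n l * x) = phiL n l * x := by
  intro l
  induction l with
  | nil => intro x T h k hk; simpa [phiL_nil] using h k hk
  | cons a t ih =>
    intro x T h k hk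
    have h2 := soundL_step (ih x T h) a k hk
    simpa [phiL_cons, mul_assoc] using h2

/-! ### concrete run computations -/

lemma run_of_forall_mem {S : Finset (Fin n)} :
    ∀ {l : List (Fin n)}, (∀ j ∈ l, j ∈ S) → run S l = S := by
  intro l
  induction l with
  | nil => intro _; rfl
  | cons a t ih =>
    intro h
    rw [run_cons, upd_of_mem (h a (List.mem_cons_self))]
    exact ih (fun j hj => h j (List.mem_cons_of_mem a hj))

lemma foldr_desc : ∀ (l : List (Fin n)) (S : Finset (Fin n)), l.Pairwise (· < ·) →
    (∀ t ∈ S, ∀ j ∈ l, j < t) →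
    List.foldr (fun j S => upd S j) S l = S ∪ l.toFinset := by
  intro l
  induction l with
  | nil => intro S _ _; simp
  | cons a t ih =>
    intro S hs hlt
    obtain ⟨ha, hs'⟩ := List.pairwise_cons.mp hs
    simp only [List.foldr]
    rw [ih S hs' (fun x hx j hj => hlt x hx j (List.mem_cons_of_mem a hj))]
    have hna : a ∉ S ∪ t.toFinset := by
      simp only [Finset.mem_union, List.mem_toFinset]
      rintro (h | h)
      · exact absurd (hlt a h a (List.mem_cons_self)) (lt_irrefl _)
      · exact absurd (ha a h) (lt_irrefl _)
    rw [upd_of_not_mem hna]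
    have hf : (S ∪ t.toFinset).filter (fun m => a < m) = S ∪ t.toFinset := by
      apply Finset.filter_true_of_mem
      intro m hm
      rcases Finset.mem_union.mp hm with h | h
      · exact hlt m h a (List.mem_cons_self)
      · exact ha m (List.mem_toFinset.mp h)
    rw [hf]
    rw [List.toFinset_cons, Finset.union_insert]

lemma foldl_asc : ∀ (l : List (Fin n)) (T : Finset (Fin n)), l.Pairwise (· < ·) →
    (∀ t ∈ T, ∀ j ∈ l, t < j) →
    List.foldl updL T l = T ∪ l.toFinset := by
  intro l
  induction l with
  | nil => intro T _ _; simp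
  | cons a t ih =>
    intro T hs hlt
    obtain ⟨ha, hs'⟩ := List.pairwise_cons.mp hs
    have hna : a ∉ T := fun h => absurd (hlt a h a (List.mem_cons_self)) (lt_irrefl _)
    have h1 : updL T a = insert a T := by
      rw [updL, if_neg hna, Finset.filter_true_of_mem
        (fun m hm => hlt m hm a (List.mem_cons_self))]
    simp only [List.foldl]
    rw [h1, ih (insert a T) hs' ?cond]
    · rw [List.toFinset_cons, Finset.insert_union, Finset.union_insert]
    case cond =>
      intro x hx j hj
      rcases Finset.mem_insert.mp hx with rfl | hx'
      · exact ha j hj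
      · exact hlt x hx' j (List.mem_cons_of_mem a hj)

/-! ### runs of descList words -/

lemma descList_sorted (lo hi : ℕ) :
    ((List.finRange n).filter
      (fun k => decide (lo ≤ k.val + 1 ∧ k.val + 1 ≤ hi))).Pairwise (· < ·) :=
  (List.pairwise_lt_finRange n).filter _

lemma run_descList (lo hi : ℕ) :
    run ∅ (descList n lo hi) =
      ((List.finRange n).filter
        (fun k => decide (lo ≤ k.val + 1 ∧ k.val + 1 ≤ hi))).toFinset := by
  rw [descList, run, List.foldl_reverse]
  rw [foldr_desc _ ∅ (descList_sorted lo hi) (by simp)]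
  simp

lemma runL_descList (lo hi : ℕ) :
    List.foldr (fun j T => updL T j) ∅ (descList n lo hi) =
      ((List.finRange n).filter
        (fun k => decide (lo ≤ k.val + 1 ∧ k.val + 1 ≤ hi))).toFinset := by
  rw [descList, List.foldr_reverse]
  rw [foldl_asc _ ∅ (descList_sorted lo hi) (by simp)]
  simp

lemma mem_fset (k : Fin n) :
    k ∈ ((List.finRange n).filter
      (fun k => decide (1 ≤ k.val + 1 ∧ k.val + 1 ≤ n))).toFinset := by
  simp only [List.mem_toFinset, List.mem_filter, List.mem_finRange, true_and,
    decide_eq_true_eq]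
  omega

lemma mem_gset (k : Fin n) :
    k ∈ ((List.finRange n).filter
      (fun k => decide (2 ≤ k.val + 1 ∧ k.val + 1 ≤ n))).toFinset ↔ k.val ≠ 0 := by
  simp only [List.mem_toFinset, List.mem_filter, List.mem_finRange, true_and,
    decide_eq_true_eq]
  omega

lemma mem_descList {k : Fin n} {lo hi : ℕ} :
    k ∈ descList n lo hi ↔ (lo ≤ k.val + 1 ∧ k.val + 1 ≤ hi) := by
  simp [descList, List.mem_filter]


/-! ### element-level consequences -/

lemma exists_word (x : K n) : ∃ l : List (Fin n), phiL n l = x := by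
  obtain ⟨w, hw⟩ := Con.mk'_surjective (c := conGen (Rel n)) x
  exact ⟨w.toList, by rw [phiL, FreeMonoid.ofList_toList]; exact hw⟩

lemma mul_list_absorb {x : K n} {l : List (Fin n)} (h : ∀ j ∈ l, x * gen j = x) :
    x * phiL n l = x := by
  induction l with
  | nil => rw [phiL_nil, mul_one]
  | cons a t ih =>
    rw [phiL_cons, ← mul_assoc, h a (List.mem_cons_self)]
    exact ih (fun j hj => h j (List.mem_cons_of_mem a hj))

lemma list_mul_absorb {z : K n} {l : List (Fin n)} (h : ∀ j ∈ l, gen j * z = z) :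
    phiL n l * z = z := by
  induction l with
  | nil => rw [phiL_nil, one_mul]
  | cons a t ih =>
    rw [phiL_cons, mul_assoc, ih (fun j hj => h j (List.mem_cons_of_mem a hj))]
    exact h a (List.mem_cons_self)

lemma fEl_mul_gen (k : Fin n) : fEl n * gen k = fEl n := by
  have h := sound_run (descList n 1 n) 1 ∅ (by simp) k
    (by rw [run_descList]; exact mem_fset k)
  simpa [fEl] using h

lemma gen_mul_fEl (j : Fin n) : gen j * fEl n = fEl n := by
  have h := soundL_run (descList n 1 n) 1 ∅ (by simp) j
    (by rw [runL_descList]; exact mem_fset j)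
  simpa [fEl] using h

lemma mul_fEl (x : K n) : x * fEl n = fEl n := by
  obtain ⟨l, rfl⟩ := exists_word x
  exact list_mul_absorb (fun j _ => gen_mul_fEl j)

lemma eq_fEl_of_absorb {z : K n} (h : ∀ k : Fin n, z * gen k = z) : z = fEl n := by
  have h1 : z * fEl n = z := mul_list_absorb (fun j _ => h j)
  rw [← h1]
  exact mul_fEl z

lemma absorb_of_sol {x : K n} {l : List (Fin n)} (hl : phiL n l = x) (i0 : Fin n)
    (h0 : i0.val = 0) (hsol : x * gen i0 = fEl n) :
    ∀ k : Fin n, k.val ≠ 0 → x * gen k = x := by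
  have hphi : phi n (FreeMonoid.ofList (l ++ [i0])) =
      phi n (FreeMonoid.ofList (descList n 1 n)) := by
    rw [FreeMonoid.ofList_append]
    show phiL n l * phiL n [i0] = fEl n
    rw [phiL_singleton, hl]
    exact hsol
  have hrun := run_eq_of_phi_eq hphi ∅
  rw [FreeMonoid.toList_ofList, FreeMonoid.toList_ofList] at hrun
  have huniv : ∀ k : Fin n, k ∈ upd (run ∅ l) i0 := by
    intro k
    have h2 : upd (run ∅ l) i0 = run ∅ (descList n 1 n) := by
      rw [← hrun, run_append]; rfl
    rw [h2, run_descList]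
    exact mem_fset k
  intro k hk
  have hkR : k ∈ run ∅ l := by
    by_cases hi : i0 ∈ run ∅ l
    · have hh := huniv k; rwa [upd_of_mem hi] at hh
    · have hh := huniv k; rw [upd_of_not_mem hi] at hh
      rcases Finset.mem_insert.mp hh with rfl | h'
      · exact absurd h0 hk
      · exact (Finset.mem_filter.mp h').1
  have h3 := sound_run l 1 ∅ (by simp) k hkR
  simpa [hl] using h3

lemma mul_gEl_of_sol {x : K n} (i0 : Fin n) (h0 : i0.val = 0)
    (hsol : x * gen i0 = fEl n) : x * phiL n (descList n 2 n) = x := by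
  obtain ⟨l, hl⟩ := exists_word x
  apply mul_list_absorb
  intro j hj
  have hj0 : j.val ≠ 0 := by
    have := mem_descList.mp hj
    omega
  exact absorb_of_sol hl i0 h0 hsol j hj0

lemma gen_mul_gEl {k : Fin n} (hk : k.val ≠ 0) :
    gen k * phiL n (descList n 2 n) = phiL n (descList n 2 n) := by
  have h := soundL_run (descList n 2 n) 1 ∅ (by simp) k
    (by rw [runL_descList]; exact (mem_gset k).mpr hk)
  simpa using h

lemma list_mul_gEl {l : List (Fin n)} (h : ∀ j ∈ l, j.val ≠ 0) :
    phiL n l * phiL n (descList n 2 n) = phiL n (descList n 2 n) :=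
  list_mul_absorb (fun j hj => gen_mul_gEl (h j hj))

lemma run_zero : ∀ {l : List (Fin n)}, (∃ j ∈ l, j.val = 0) →
    ∀ {S : Finset (Fin n)}, (∀ k : Fin n, k.val ≠ 0 → k ∈ S) →
    ∀ k, k ∈ run S l := by
  intro l
  induction l with
  | nil => intro h0; exact absurd h0 (by simp)
  | cons a t ih =>
    intro h0 S hS
    by_cases ha : a.val = 0
    · have hS' : ∀ k : Fin n, k ∈ upd S a := by
        intro k
        by_cases hk : k.val = 0
        · have hka : k = a := Fin.val_injective (by rw [hk, ha])
          exact hka ▸ self_mem_upd S a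
        · have hkS : k ∈ S := hS k hk
          unfold upd
          split
          · exact hkS
          · refine Finset.mem_insert_of_mem (Finset.mem_filter.mpr ⟨hkS, ?_⟩)
            rw [Fin.lt_def, ha]
            omega
      intro k
      rw [run_cons, run_of_forall_mem (fun j _ => hS' j)]
      exact hS' k
    · intro k
      rw [run_cons, upd_of_mem (hS a ha)]
      have h0' : ∃ j ∈ t, j.val = 0 := by
        rcases h0 with ⟨j, hj, hj0⟩
        rcases List.mem_cons.mp hj with rfl | hjt
        · exact absurd hj0 ha
        · exact ⟨j, hjt, hj0⟩
      exact ih h0' hS k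

lemma sandwich {l : List (Fin n)} (h0 : ∃ j ∈ l, j.val = 0) :
    phiL n (descList n 2 n) * phiL n l * phiL n (descList n 2 n) = fEl n := by
  have habs : ∀ k : Fin n,
      phiL n (descList n 2 n ++ l ++ descList n 2 n) * gen k
        = phiL n (descList n 2 n ++ l ++ descList n 2 n) := by
    intro k
    have hk : k ∈ run ∅ (descList n 2 n ++ l ++ descList n 2 n) := by
      rw [run_append, run_append, run_descList]
      have h1 : ∀ m : Fin n, m ∈ run
          ((List.finRange n).filter
            (fun k => decide (2 ≤ k.val + 1 ∧ k.val + 1 ≤ n))).toFinset l :=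
        run_zero h0 (fun m hm => (mem_gset m).mpr hm)
      rw [run_of_forall_mem (fun j _ => h1 j)]
      exact h1 k
    have h2 := sound_run (descList n 2 n ++ l ++ descList n 2 n) 1 ∅ (by simp) k hk
    simpa using h2
  have h3 := eq_fEl_of_absorb habs
  rw [phiL_append, phiL_append] at h3
  exact h3

end Aux

/-- The solution set `R = {x : x * a_1 = f}` is closed under multiplication, and for
`x, y ∈ R`: if `y = a_n ⋯ a_2` then `x * y = x`, otherwise `x * y = f`. -/


theorem solution_set_semigroup (n : ℕ) (hn : 2 ≤ n) (x y : K n)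
    (hx : x * gen ⟨0, by omega⟩ = fEl n) (hy : y * gen ⟨0, by omega⟩ = fEl n) :
    (x * y) * gen ⟨0, by omega⟩ = fEl n ∧
    (y = phiL n (descList n 2 n) → x * y = x) ∧
    (y ≠ phiL n (descList n 2 n) → x * y = fEl n) := by

  refine ⟨?_, ?_, ?_⟩
  · rw [mul_assoc, hy]
    exact mul_fEl x
  · intro hyg
    rw [hyg]
    exact mul_gEl_of_sol ⟨0, by omega⟩ rfl hx
  · intro hne
    obtain ⟨l, hl⟩ := exists_word y
    by_cases h0 : ∃ j ∈ l, j.val = 0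
    · have hxg : x * phiL n (descList n 2 n) = x := mul_gEl_of_sol ⟨0, by omega⟩ rfl hx
      have hyg : y * phiL n (descList n 2 n) = y := mul_gEl_of_sol ⟨0, by omega⟩ rfl hy
      have hs : phiL n (descList n 2 n) * (phiL n l * phiL n (descList n 2 n)) = fEl n := by
        rw [← mul_assoc]
        exact sandwich h0
      calc x * y = (x * phiL n (descList n 2 n)) * (phiL n l * phiL n (descList n 2 n)) := by
            rw [hxg, hl, hyg]
        _ = x * (phiL n (descList n 2 n) * (phiL n l * phiL n (descList n 2 n))) := by
            rw [mul_assoc]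
        _ = x * fEl n := by rw [hs]
        _ = fEl n := mul_fEl x
    · exfalso
      apply hne
      push_neg at h0
      have h1 : y * phiL n (descList n 2 n) = phiL n (descList n 2 n) := by
        rw [← hl]; exact list_mul_gEl h0
      have h2 : y * phiL n (descList n 2 n) = y := mul_gEl_of_sol ⟨0, by omega⟩ rfl hy
      rw [← h2]
      exact h1
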